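/- Consider the path graphical game on players U_{−1}, V_{−1}, U_0, V_0, U_1, V_1, …, U_{k−1}, V_{k−1}, U_k described in the context, with parameters x', x'' and A_1, …, A_{k−1}. At any Nash equilibrium of the form (u_{−1}, 1/2, u_0, 1/2, u_1, 1/2, …, u_{k−1}, 1/2, u_k) with u_0 = (x''−x')u_{−1} + x', u_1 = u_0/(u_0+1) and u_{i+1} = 1/(2 − u_i) for i = 1, …, k−1, the total expected payoff (sum of all players' expected payoffs) equals (k+1)/2 − Σ_{i=1}^{k−1} A_i/(u_0 + i + 1). -/

import Mathlib

noncomputable section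

/-- Nash equilibrium condition for the graphical game on the path
`U₋₁ V₋₁ U₀ V₀ U₁ V₁ … U_{k−1} V_{k−1} U_k`.
Here `um`, `vm` are the strategies of `U₋₁` and `V₋₁`, while `u i` (`0 ≤ i ≤ k`)
and `v i` (`0 ≤ i ≤ k−1`) are the strategies of `Uᵢ` and `Vᵢ`.
The payoffs are:
* `U₋₁` gets payoff identically `0` (its Nash conditions are vacuous);
* `V₋₁` gets expected payoff `0` for action 0, `u 0 − (x''−x')·um − x'` for action 1;
* `V₀` gets `0` for action 0 and `u 1·(u 0 + 1) − u 0` for action 1;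
* for `1 ≤ i ≤ k−1`, `Vᵢ` gets `Aᵢ uᵢ u_{i+1} − Aᵢ u_{i+1}` for action 0 and that
  plus `u_{i+1}·(2 − uᵢ) − 1` for action 1;
* for `0 ≤ i ≤ k`, `Uᵢ` gets `1` iff its action differs from that of `V_{i−1}`,
  so its expected payoffs are `v_{i−1}` for action 0 and `1 − v_{i−1}` for action 1
  (with `V_{−1}`'s strategy `vm` when `i = 0`). -/
def IsNashPath (k : ℕ) (x' x'' : ℚ) (A : ℕ → ℝ)
    (um vm : ℝ) (u v : ℕ → ℝ) : Prop :=
  um ∈ Set.Icc (0:ℝ) 1 ∧ vm ∈ Set.Icc (0:ℝ) 1 ∧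
  (∀ i ≤ k, u i ∈ Set.Icc (0:ℝ) 1) ∧
  (∀ i ≤ k - 1, v i ∈ Set.Icc (0:ℝ) 1) ∧
  (0 < vm → 0 ≤ u 0 - ((x'':ℝ) - (x':ℝ)) * um - (x':ℝ)) ∧
  (vm < 1 → u 0 - ((x'':ℝ) - (x':ℝ)) * um - (x':ℝ) ≤ 0) ∧
  (0 < v 0 → 0 ≤ u 1 * (u 0 + 1) - u 0) ∧
  (v 0 < 1 → u 1 * (u 0 + 1) - u 0 ≤ 0) ∧
  (∀ i, 1 ≤ i → i ≤ k - 1 →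
    (0 < v i → A i * u i * u (i+1) - A i * u (i+1) ≤
        A i * u i * u (i+1) - A i * u (i+1) + u (i+1) * (2 - u i) - 1) ∧
    (v i < 1 → A i * u i * u (i+1) - A i * u (i+1) + u (i+1) * (2 - u i) - 1 ≤
        A i * u i * u (i+1) - A i * u (i+1))) ∧
  (∀ i ≤ k,
    (0 < u i → (if i = 0 then vm else v (i-1)) ≤ 1 - (if i = 0 then vm else v (i-1))) ∧
    (u i < 1 → 1 - (if i = 0 then vm else v (i-1)) ≤ (if i = 0 then vm else v (i-1))))

/-- Total expected payoff of a strategy profile in the path game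
(`U₋₁` contributes `0`; each player's expected payoff is the probability-weighted
average of its expected payoffs for actions 0 and 1). -/
def TotalPayoffPath (k : ℕ) (x' x'' : ℚ) (A : ℕ → ℝ)
    (um vm : ℝ) (u v : ℕ → ℝ) : ℝ :=
  vm * (u 0 - ((x'':ℝ) - (x':ℝ)) * um - (x':ℝ)) +
  v 0 * (u 1 * (u 0 + 1) - u 0) +
  (∑ i ∈ Finset.Icc 1 (k - 1),
    (v i * (A i * u i * u (i+1) - A i * u (i+1) + u (i+1) * (2 - u i) - 1) +
     (1 - v i) * (A i * u i * u (i+1) - A i * u (i+1)))) +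
  (∑ i ∈ Finset.range (k + 1),
    (u i * (1 - (if i = 0 then vm else v (i-1))) +
     (1 - u i) * (if i = 0 then vm else v (i-1))))

theorem total_payoff_structured_nash (k : ℕ) (hk : 2 ≤ k) (x' x'' : ℚ)
    (hx1 : 0 < x') (hx2 : x' < x'') (hx3 : x'' < 1)
    (A : ℕ → ℝ) (um vm : ℝ) (u v : ℕ → ℝ)
    (hN : IsNashPath k x' x'' A um vm u v)
    (hvm : vm = 1/2) (hv : ∀ i ≤ k - 1, v i = 1/2)
    (hu0 : u 0 = ((x'':ℝ) - (x':ℝ)) * um + (x':ℝ))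
    (hu1 : u 1 = u 0 / (u 0 + 1))
    (hrec : ∀ i, 1 ≤ i → i ≤ k - 1 → u (i + 1) = 1 / (2 - u i)) :
    TotalPayoffPath k x' x'' A um vm u v =
      ((k : ℝ) + 1) / 2 - ∑ i ∈ Finset.Icc 1 (k - 1), A i / (u 0 + (i : ℝ) + 1) :=  by
  obtain ⟨hum, -, huIcc, -, -, -, -, -, -, -⟩ := hN
  have hu0pos : 0 < u 0 := by
    rw [hu0]
    have h1 : (0:ℝ) < (x':ℝ) := by exact_mod_cast hx1
    have h2 : (x':ℝ) < (x'':ℝ) := by exact_mod_cast hx2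
    nlinarith [hum.1]
  -- closed form for u i
  have key : ∀ i, 1 ≤ i → i ≤ k → u i = (u 0 + i - 1) / (u 0 + i) := by
    intro i h1 h2
    induction i with
    | zero => omega
    | succ n ih =>
      rcases Nat.eq_zero_or_pos n with hn | hn
      · subst hn; simpa using hu1
      · have hnk : n ≤ k - 1 := by omega
        have hform : u n = (u 0 + n - 1) / (u 0 + n) := ih hn (by omega)
        have hpos : (0:ℝ) < u 0 + n := by positivity
        rw [hrec n hn hnk, hform]
        have h2n : (2:ℝ) - (u 0 + n - 1) / (u 0 + n) = (u 0 + n + 1) / (u 0 + n) := by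
          field_simp; ring
        rw [h2n]
        have hpos2 : (0:ℝ) < u 0 + n + 1 := by positivity
        push_cast
        rw [one_div_div]
        ring_nf
  unfold TotalPayoffPath
  have t1 : vm * (u 0 - ((x'':ℝ) - (x':ℝ)) * um - (x':ℝ)) = 0 := by
    rw [hu0]; ring
  have t2 : v 0 * (u 1 * (u 0 + 1) - u 0) = 0 := by
    have : u 0 + 1 ≠ 0 := by positivity
    rw [hu1]; field_simp; ring
  have t4 : (∑ i ∈ Finset.range (k + 1),
      (u i * (1 - (if i = 0 then vm else v (i-1))) +
       (1 - u i) * (if i = 0 then vm else v (i-1)))) = ((k:ℝ) + 1) / 2 := by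
    have h : ∀ i ∈ Finset.range (k+1),
        (u i * (1 - (if i = 0 then vm else v (i-1))) +
         (1 - u i) * (if i = 0 then vm else v (i-1))) = 1/2 := by
      intro i hi
      have hik : i ≤ k := by
        simp only [Finset.mem_range] at hi; omega
      have hhalf : (if i = 0 then vm else v (i-1)) = 1/2 := by
        split
        · exact hvm
        · exact hv (i-1) (by omega)
      rw [hhalf]; ring
    rw [Finset.sum_congr rfl h, Finset.sum_const, Finset.card_range, nsmul_eq_mul]
    push_cast; ring
  have t3 : (∑ i ∈ Finset.Icc 1 (k - 1),
      (v i * (A i * u i * u (i+1) - A i * u (i+1) + u (i+1) * (2 - u i) - 1) +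
       (1 - v i) * (A i * u i * u (i+1) - A i * u (i+1)))) =
      ∑ i ∈ Finset.Icc 1 (k - 1), (- (A i / (u 0 + (i:ℝ) + 1))) := by
    refine Finset.sum_congr rfl (fun i hi => ?_)
    simp only [Finset.mem_Icc] at hi
    obtain ⟨hi1, hi2⟩ := hi
    have hui : u i = (u 0 + i - 1) / (u 0 + i) := key i hi1 (by omega)
    have hui1 := key (i+1) (by omega : 1 ≤ i+1) (by omega : i+1 ≤ k)
    push_cast at hui1
    have hvi : v i = 1/2 := hv i hi2
    have hp1 : (0:ℝ) < u 0 + i := by positivity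
    have hp2 : (0:ℝ) < u 0 + i + 1 := by positivity
    rw [hvi, hui, hui1]
    push_cast
    field_simp
    ring
  rw [t1, t2, t3, t4, Finset.sum_neg_distrib]
  ring
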